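/- For all complex numbers x, y with x ≠ 0, y ≠ 0 and x + y ≠ 0, one has R̃₁₂(x+y) R̃₁₃(x) R₂₃(y) = R₂₃(y) R̃₁₃(x) R̃₁₂(x+y) as operators on (ℂⁿ)^{⊗3}. -/

import Mathlib

noncomputable section
open scoped Kronecker
open Matrix

/-- Square matrices acting on the tensor power `(ℂⁿ)^{⊗ι}`, modelled on the
function basis `ι → Fin n`. -/
abbrev TMat (ι : Type) (n : ℕ) := Matrix (ι → Fin n) (ι → Fin n) ℂ

/-- The matrix units `E_{ij}` of `End(ℂⁿ)`. -/
def matE (n : ℕ) (i j : Fin n) : Matrix (Fin n) (Fin n) ℂ := Matrix.single i j 1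

/-- The flip `P = Σ E_{ij} ⊗ E_{ji}` on `ℂⁿ ⊗ ℂⁿ`. -/
def flipP (n : ℕ) : Matrix (Fin n × Fin n) (Fin n × Fin n) ℂ :=
  ∑ i : Fin n, ∑ j : Fin n, matE n i j ⊗ₖ matE n j i

/-- `P̄ = Σ E_{ij} ⊗ E_{ij}` on `ℂⁿ ⊗ ℂⁿ`. -/
def PbarM (n : ℕ) : Matrix (Fin n × Fin n) (Fin n × Fin n) ℂ :=
  ∑ i : Fin n, ∑ j : Fin n, matE n i j ⊗ₖ matE n i j

/-- The conjugate `X̃ = G⁻¹ Xᵀ G` of `X` relative to the bilinear form with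
Gram matrix `G`, i.e. `⟨X u, v⟩ = ⟨u, X̃ v⟩` where `⟨u, v⟩ = uᵀ G v`. -/
def conjF {n : ℕ} (G X : Matrix (Fin n) (Fin n) ℂ) : Matrix (Fin n) (Fin n) ℂ :=
  G⁻¹ * Xᵀ * G

/-- `P̃ = Σ Ẽ_{ij} ⊗ E_{ji}`. -/
def PtilM (n : ℕ) (G : Matrix (Fin n) (Fin n) ℂ) : Matrix (Fin n × Fin n) (Fin n × Fin n) ℂ :=
  ∑ i : Fin n, ∑ j : Fin n, conjF G (matE n i j) ⊗ₖ matE n j i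

/-- `P̂ = Σ Ẽ_{ij} ⊗ E_{ij}`. -/
def PhatM (n : ℕ) (G : Matrix (Fin n) (Fin n) ℂ) : Matrix (Fin n × Fin n) (Fin n × Fin n) ℂ :=
  ∑ i : Fin n, ∑ j : Fin n, conjF G (matE n i j) ⊗ₖ matE n i j

/-- The Yang R-matrix `R(x) = 1 − P x⁻¹`. -/
def Rm (n : ℕ) (x : ℂ) : Matrix (Fin n × Fin n) (Fin n × Fin n) ℂ := 1 - x⁻¹ • flipP n

/-- `R̄(x) = 1 − P̄ x⁻¹`. -/
def RbarM (n : ℕ) (x : ℂ) : Matrix (Fin n × Fin n) (Fin n × Fin n) ℂ := 1 - x⁻¹ • PbarM n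

/-- `R̃(x) = 1 − P̃ x⁻¹`. -/
def RtilM (n : ℕ) (G : Matrix (Fin n) (Fin n) ℂ) (x : ℂ) :
    Matrix (Fin n × Fin n) (Fin n × Fin n) ℂ := 1 - x⁻¹ • PtilM n G

/-- `R̂(x) = 1 − P̂ x⁻¹`. -/
def RhatM (n : ℕ) (G : Matrix (Fin n) (Fin n) ℂ) (x : ℂ) :
    Matrix (Fin n × Fin n) (Fin n × Fin n) ℂ := 1 - x⁻¹ • PhatM n G

/-- `Z_{ij}` : the operator on a tensor power of `ℂⁿ` acting as the two-factor
operator `Z` in the `i`-th and `j`-th tensor factors and as the identity elsewhere. -/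
def lift2 {n : ℕ} {ι : Type} [Fintype ι] [DecidableEq ι] (i j : ι)
    (Z : Matrix (Fin n × Fin n) (Fin n × Fin n) ℂ) : TMat ι n :=
  fun f g => Z (f i, f j) (g i, g j) *
    ∏ p : ι, if p = i ∨ p = j then 1 else (if f p = g p then 1 else 0)

/-!
Write `A = P̃₁₂`, `B = P̃₁₃`, `C = P₂₃`. Conjugation by the flip `C` exchanges the second and
third tensor factors, so `C A = B C` and `C B = A C`. The matrix `P̃` has entries
`P̃_{(a,b),(c,d)} = (G⁻¹)_{ab} G_{dc}`, so it has rank one, and in `A B` and `B A` the index shared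
by the two factors is contracted against `G G⁻¹ = 1`; this gives `A B = A C` and `B A = C A`.
Expanding both sides with these four relations, they differ by `(ab + ac - bc) (A C - B C)` with
`a = (x + y)⁻¹`, `b = x⁻¹`, `c = y⁻¹`, and `ab + ac = bc`.
-/

section lift2

variable {n : ℕ} {ι : Type} [Fintype ι] [DecidableEq ι]

lemma lift2_sub (i j : ι) (Z W : Matrix (Fin n × Fin n) (Fin n × Fin n) ℂ) :
    lift2 i j (Z - W) = lift2 i j Z - lift2 i j W := by
  ext f g
  simp [lift2, sub_mul]

lemma lift2_smul (i j : ι) (c : ℂ) (Z : Matrix (Fin n × Fin n) (Fin n × Fin n) ℂ) :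
    lift2 i j (c • Z) = c • lift2 i j Z := by
  ext f g
  simp [lift2, mul_assoc]

lemma lift2_one (i j : ι) :
    lift2 i j (1 : Matrix (Fin n × Fin n) (Fin n × Fin n) ℂ) = 1 := by
  ext f g
  have hprod : (∏ p : ι, if p = i ∨ p = j then 1 else (if f p = g p then 1 else 0) : ℂ)
      = if ∀ p, p = i ∨ p = j ∨ f p = g p then 1 else 0 := by
    rw [← Fintype.prod_boole]
    refine Fintype.prod_congr _ _ fun p => ?_
    by_cases hp : p = i ∨ p = j
    · rw [if_pos hp, if_pos (or_assoc.1 (Or.inl hp))]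
    · simp only [← or_assoc, hp, false_or, if_false]
  rw [lift2, hprod, Matrix.one_apply, Matrix.one_apply, ite_zero_mul_ite_zero, one_mul]
  refine if_congr ⟨fun ⟨hij, hp⟩ => funext fun p => ?_, fun h => ⟨by rw [h], fun p => ?_⟩⟩ rfl rfl
  · rcases hp p with rfl | rfl | h
    exacts [(Prod.ext_iff.1 hij).1, (Prod.ext_iff.1 hij).2, h]
  · exact Or.inr (Or.inr (congrFun h p))

lemma lift2_one_sub_smul (i j : ι) (c : ℂ)
    (Z : Matrix (Fin n × Fin n) (Fin n × Fin n) ℂ) :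
    lift2 i j (1 - c • Z) = 1 - c • lift2 i j Z := by
  rw [lift2_sub, lift2_smul, lift2_one]

end lift2

lemma sum_fin_three_fun {α M : Type*} [Fintype α] [AddCommMonoid M] (T : (Fin 3 → α) → M) :
    ∑ h, T h = ∑ a, ∑ b, ∑ c, T ![a, b, c] := by
  let e : α × α × α ≃ (Fin 3 → α) :=
    { toFun := fun x => ![x.1, x.2.1, x.2.2]
      invFun := fun h => (h 0, h 1, h 2)
      left_inv := fun _ => rfl
      right_inv := fun h => funext fun p => by fin_cases p <;> rfl }
  rw [← e.sum_comp]
  simp only [Fintype.sum_prod_type]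
  rfl

section fin_three

/- Kronecker deltas are written `Pi.single i 1 j` rather than `if i = j then 1 else 0`: once the
sum over `Fin 3 → Fin n` is split, `![a, b, c] k` has to be reduced inside them, and the
`Matrix.cons_val` simproc leaves the `Decidable` instance of an `if` unreduced. -/

variable {n : ℕ} (Z : Matrix (Fin n × Fin n) (Fin n × Fin n) ℂ) (f g : Fin 3 → Fin n)

lemma lift2_zero_one_apply :
    lift2 0 1 Z f g = Z (f 0, f 1) (g 0, g 1) * (Pi.single (f 2) 1 : Fin n → ℂ) (g 2) := by
  simp [lift2, Fin.prod_univ_three, Pi.single_apply, eq_comm]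

lemma lift2_zero_two_apply :
    lift2 0 2 Z f g = Z (f 0, f 2) (g 0, g 2) * (Pi.single (f 1) 1 : Fin n → ℂ) (g 1) := by
  simp [lift2, Fin.prod_univ_three, Pi.single_apply, eq_comm]

lemma lift2_one_two_apply :
    lift2 1 2 Z f g = Z (f 1, f 2) (g 1, g 2) * (Pi.single (f 0) 1 : Fin n → ℂ) (g 0) := by
  simp [lift2, Fin.prod_univ_three, Pi.single_apply, eq_comm]

end fin_three

lemma flipP_apply {n : ℕ} (a b c d : Fin n) :
    flipP n (a, b) (c, d) = (Pi.single a 1 : Fin n → ℂ) d * (Pi.single b 1 : Fin n → ℂ) c := by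
  simp only [flipP, matE, Matrix.sum_apply, Matrix.kroneckerMap_apply, Matrix.single_apply,
    Pi.single_apply]
  by_cases h : a = d <;> simp [h, ite_and, eq_comm]

lemma PtilM_apply {n : ℕ} (G : Matrix (Fin n) (Fin n) ℂ) (a b c d : Fin n) :
    PtilM n G (a, b) (c, d) = G⁻¹ a b * G d c := by
  simp [PtilM, conjF, matE, Matrix.mul_apply, Matrix.single, Matrix.sum_apply,
    ite_and]

section conj

variable {n : ℕ} (Z : Matrix (Fin n × Fin n) (Fin n × Fin n) ℂ)

lemma lift2_flipP_mul_lift2_zero_one :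
    lift2 (1 : Fin 3) 2 (flipP n) * lift2 0 1 Z = lift2 0 2 Z * lift2 1 2 (flipP n) := by
  ext f g
  simp only [Matrix.mul_apply, sum_fin_three_fun, lift2_zero_one_apply, lift2_zero_two_apply,
    lift2_one_two_apply, flipP_apply, Matrix.cons_val]
  simp [Pi.single_apply, mul_ite, ite_mul]

lemma lift2_flipP_mul_lift2_zero_two :
    lift2 (1 : Fin 3) 2 (flipP n) * lift2 0 2 Z = lift2 0 1 Z * lift2 1 2 (flipP n) := by
  ext f g
  simp only [Matrix.mul_apply, sum_fin_three_fun, lift2_zero_one_apply, lift2_zero_two_apply,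
    lift2_one_two_apply, flipP_apply, Matrix.cons_val]
  simp [Pi.single_apply, mul_ite, ite_mul]

end conj

section rank_one

variable {n : ℕ} {G : Matrix (Fin n) (Fin n) ℂ}

lemma sum_apply_mul_inv_apply (hG : IsUnit G.det) (i j : Fin n) :
    ∑ x, G i x * G⁻¹ x j = if i = j then 1 else 0 := by
  rw [← Matrix.mul_apply, Matrix.mul_nonsing_inv G hG, Matrix.one_apply]

lemma lift2_PtilM_zero_one_mul_zero_two (hG : IsUnit G.det) :
    lift2 (0 : Fin 3) 1 (PtilM n G) * lift2 0 2 (PtilM n G)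
      = lift2 0 1 (PtilM n G) * lift2 1 2 (flipP n) := by
  ext f g
  simp only [Matrix.mul_apply, sum_fin_three_fun, lift2_zero_one_apply, lift2_zero_two_apply,
    lift2_one_two_apply, flipP_apply, PtilM_apply, Matrix.cons_val]
  simp only [Pi.single_apply, mul_ite, ite_mul, mul_one, mul_zero, zero_mul,
    Finset.sum_ite_irrel, Finset.sum_ite_eq, Finset.sum_ite_eq', Finset.mem_univ, if_true,
    Finset.sum_const_zero]
  rw [← boole_mul, ← sum_apply_mul_inv_apply hG, Finset.sum_mul]
  exact Finset.sum_congr rfl fun x _ => by ring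

lemma lift2_PtilM_zero_two_mul_zero_one (hG : IsUnit G.det) :
    lift2 (0 : Fin 3) 2 (PtilM n G) * lift2 0 1 (PtilM n G)
      = lift2 1 2 (flipP n) * lift2 0 1 (PtilM n G) := by
  ext f g
  simp only [Matrix.mul_apply, sum_fin_three_fun, lift2_zero_one_apply, lift2_zero_two_apply,
    lift2_one_two_apply, flipP_apply, PtilM_apply, Matrix.cons_val]
  simp only [Pi.single_apply, mul_ite, ite_mul, mul_one, mul_zero, one_mul, zero_mul,
    Finset.sum_ite_irrel, Finset.sum_ite_eq, Finset.sum_ite_eq', Finset.mem_univ, if_true,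
    Finset.sum_const_zero]
  rw [← boole_mul, ← sum_apply_mul_inv_apply hG, Finset.sum_mul]
  exact Finset.sum_congr rfl fun x _ => by ring

end rank_one

lemma yangBaxter_of_relations {K R : Type*} [Field K] [Ring R] [Algebra K R] {A B C : R}
    (hCA : C * A = B * C) (hCB : C * B = A * C) (hAB : A * B = A * C) (hBA : B * A = C * A)
    {x y : K} (hx : x ≠ 0) (hy : y ≠ 0) (hxy : x + y ≠ 0) :
    (1 - (x + y)⁻¹ • A) * (1 - x⁻¹ • B) * (1 - y⁻¹ • C)
      = (1 - y⁻¹ • C) * (1 - x⁻¹ • B) * (1 - (x + y)⁻¹ • A) := by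
  have hABC : A * (B * C) = C * (C * A) := by
    rw [← hCA, ← mul_assoc, ← hCB, mul_assoc, hBA]
  simp only [mul_sub, sub_mul, smul_mul_assoc, mul_smul_comm, one_mul, mul_one,
    mul_assoc]
  rw [hAB, hCB, hABC, hBA, hCA]
  match_scalars <;> field_simp <;> ring

theorem stmt2_general (n : ℕ) (G : Matrix (Fin n) (Fin n) ℂ)
    (hG : IsUnit G.det)
    (x y : ℂ) (hx : x ≠ 0) (hy : y ≠ 0) (hxy : x + y ≠ 0) :
    lift2 (0 : Fin 3) 1 (RtilM n G (x + y)) * lift2 (0 : Fin 3) 2 (RtilM n G x) *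
      lift2 (1 : Fin 3) 2 (Rm n y)
  = lift2 (1 : Fin 3) 2 (Rm n y) * lift2 (0 : Fin 3) 2 (RtilM n G x) *
      lift2 (0 : Fin 3) 1 (RtilM n G (x + y)) := by
  simp only [RtilM, Rm, lift2_one_sub_smul]
  exact yangBaxter_of_relations (lift2_flipP_mul_lift2_zero_one _)
    (lift2_flipP_mul_lift2_zero_two _) (lift2_PtilM_zero_one_mul_zero_two hG)
    (lift2_PtilM_zero_two_mul_zero_one hG) hx hy hxy

/-- `R̃₁₂(x+y) R̃₁₃(x) R₂₃(y) = R₂₃(y) R̃₁₃(x) R̃₁₂(x+y)` on `(ℂⁿ)^{⊗3}`,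
for the conjugation relative to any non-degenerate symmetric or alternating
bilinear form on `ℂⁿ` (with Gram matrix `G`). -/
theorem stmt2 (n : ℕ) (hn : 1 ≤ n) (G : Matrix (Fin n) (Fin n) ℂ)
    (hG : IsUnit G.det) (hform : Gᵀ = G ∨ Gᵀ = -G)
    (x y : ℂ) (hx : x ≠ 0) (hy : y ≠ 0) (hxy : x + y ≠ 0) :
    lift2 (0 : Fin 3) 1 (RtilM n G (x + y)) * lift2 (0 : Fin 3) 2 (RtilM n G x) *
      lift2 (1 : Fin 3) 2 (Rm n y)
  = lift2 (1 : Fin 3) 2 (Rm n y) * lift2 (0 : Fin 3) 2 (RtilM n G x) *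
      lift2 (0 : Fin 3) 1 (RtilM n G (x + y)) :=
  stmt2_general n G hG x y hx hy hxy
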